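/- For the spread-out model on ℤ^d in every dimension d ≥ 1, every L ≥ 1, and every n ≥ 0, the number of lattice animals satisfies a_n(d,L) ≤ K^n (n+1)^{n−1}/n!, where K = (2L+1)^d − 1. -/

import Mathlib

open Filter

/-- Vertices of the `d`-dimensional integer lattice `ℤ^d`. -/
abbrev Vtx (d : ℕ) := Fin d → ℤ

/-- The nearest-neighbour graph on `ℤ^d`: `x ~ y` iff `‖x - y‖₁ = 1`. -/
def nnGraph (d : ℕ) : SimpleGraph (Vtx d) where
  Adj x y := (∑ i, |x i - y i|) = 1
  symm := by
    constructor
    intro x y h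
    have e : ∀ i, |y i - x i| = |x i - y i| := fun i => abs_sub_comm _ _
    simpa only [e] using h
  loopless := by constructor; intro x h; simp at h

/-- The spread-out graph on `ℤ^d`: `x ~ y` iff `0 < ‖x - y‖_∞ ≤ L`. -/
def spreadGraph (d L : ℕ) : SimpleGraph (Vtx d) where
  Adj x y := x ≠ y ∧ ∀ i, |x i - y i| ≤ (L : ℤ)
  symm := by
    constructor
    rintro x y ⟨h1, h2⟩
    exact ⟨h1.symm, fun i => by rw [abs_sub_comm]; exact h2 i⟩
  loopless := by constructor; rintro x ⟨h, -⟩; exact h rfl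

/-- The graph on `ℤ^d` determined by a finite set of bonds. -/
def bondGraph (d : ℕ) (E : Finset (Sym2 (Vtx d))) : SimpleGraph (Vtx d) :=
  SimpleGraph.fromEdgeSet (E : Set (Sym2 (Vtx d)))

/-- `E` is the bond set of a lattice animal (finite connected subgraph of `G`)
whose vertex set contains the origin.  (When `E = ∅`, the animal is the single
vertex at the origin.) -/
def IsLatticeAnimal (d : ℕ) (G : SimpleGraph (Vtx d)) (E : Finset (Sym2 (Vtx d))) : Prop :=
  (E : Set (Sym2 (Vtx d))) ⊆ G.edgeSet ∧
  (bondGraph d E).support.Pairwise (bondGraph d E).Reachable ∧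
  (E.Nonempty → (0 : Vtx d) ∈ (bondGraph d E).support)

/-- `E` is the bond set of a lattice tree (finite connected subgraph of `G` containing
no cycles) whose vertex set contains the origin. -/
def IsLatticeTree (d : ℕ) (G : SimpleGraph (Vtx d)) (E : Finset (Sym2 (Vtx d))) : Prop :=
  IsLatticeAnimal d G E ∧ (bondGraph d E).IsAcyclic

/-- `a_n`: the number of `n`-bond lattice animals in `G` containing the origin. -/
noncomputable def animalCount (d : ℕ) (G : SimpleGraph (Vtx d)) (n : ℕ) : ℕ :=
  Set.ncard {E : Finset (Sym2 (Vtx d)) | E.card = n ∧ IsLatticeAnimal d G E}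

/-- `t_n`: the number of `n`-bond lattice trees in `G` containing the origin. -/
noncomputable def treeCount (d : ℕ) (G : SimpleGraph (Vtx d)) (n : ℕ) : ℕ :=
  Set.ncard {E : Finset (Sym2 (Vtx d)) | E.card = n ∧ IsLatticeTree d G E}

/-!
Numbering the bonds of an `n`-bond animal in all `n!` ways and exploring it from the origin,
one bond at a time touching the explored part, the new endpoint of bond `i` becomes vertex
`i + 1`, hung from an already explored vertex. This yields a tree on `{0, …, n}` rooted at `0`
and, for each bond, its displacement: a nonzero vector of sup norm at most `L`, so one of `K`
choices. The numbered animal is recovered from the tree and the displacements by summing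
displacements along tree paths, whence `a_n · n! ≤ t · K^n` with `t` the number of trees on
`n + 1` labelled vertices rooted at `0`. Joyal's injection of (rooted tree, marked vertex)
pairs into maps fixing the root gives `t · (n + 1) ≤ (n + 1)^n`.
-/

open Function Set

/-- A tree on `α` rooted at `r`, encoded by its parent map. -/
def IsRootedTree {α : Type*} (r : α) (p : α → α) : Prop :=
  p r = r ∧ ∀ v, ∃ k, p^[k] v = r

namespace IsRootedTree

variable {α : Type*} {r : α} {p : α → α}

theorem iterate_root (hp : IsRootedTree r p) (k : ℕ) : p^[k] r = r :=
  iterate_fixed hp.1 k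

theorem eq_root_of_isPeriodicPt (hp : IsRootedTree r p) {v : α} {t : ℕ} (ht : 0 < t)
    (hv : IsPeriodicPt p t v) : v = r := by
  obtain ⟨k, hk⟩ := hp.2 v
  calc v = p^[t * k] v := (hv.mul_const k).eq.symm
    _ = p^[t * k - k] (p^[k] v) := by
      rw [← iterate_add_apply, Nat.sub_add_cancel (Nat.le_mul_of_pos_left k ht)]
    _ = r := by rw [hk, hp.iterate_root]

theorem ext_of_sub_parent {G : Type*} [AddGroup G] (hp : IsRootedTree r p) {f g : α → G}
    (hr : f r = g r) (h : ∀ v, v ≠ r → f v - f (p v) = g v - g (p v)) : f = g := by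
  suffices ∀ k v, p^[k] v = r → f v = g v from funext fun v => this _ v (hp.2 v).choose_spec
  intro k
  induction k with
  | zero => rintro v rfl; exact hr
  | succ k ih =>
    intro v hv
    have hpv := ih (p v) hv
    by_cases hvr : v = r
    · rw [hvr, hr]
    · simpa [hpv] using h v hvr

variable [DecidableEq α]

noncomputable def depth (hp : IsRootedTree r p) (v : α) : ℕ := Nat.find (hp.2 v)

theorem iterate_depth (hp : IsRootedTree r p) (v : α) : p^[hp.depth v] v = r :=
  Nat.find_spec (hp.2 v)

theorem iterate_ne_root_of_lt_depth (hp : IsRootedTree r p) {v : α} {t : ℕ}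
    (ht : t < hp.depth v) : p^[t] v ≠ r :=
  Nat.find_min (hp.2 v) ht

theorem injOn_iterate (hp : IsRootedTree r p) (v : α) :
    InjOn (p^[·] v) (Iio (hp.depth v)) := by
  suffices ∀ a b, a < b → b < hp.depth v → p^[a] v ≠ p^[b] v by
    intro a ha b hb hab
    rcases lt_trichotomy a b with h | h | h
    · exact absurd hab (this a b h hb)
    · exact h
    · exact absurd hab.symm (this b a h ha)
  intro a b hab hb heq
  have hper : IsPeriodicPt p (b - a) (p^[a] v) := by
    rw [IsPeriodicPt, IsFixedPt, ← iterate_add_apply, Nat.sub_add_cancel hab.le, heq]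
  exact hp.iterate_ne_root_of_lt_depth (hab.trans hb)
    (hp.eq_root_of_isPeriodicPt (Nat.sub_pos_of_lt hab) hper)

noncomputable def pathSet (hp : IsRootedTree r p) (v : α) : Finset α :=
  (Finset.range (hp.depth v)).image (p^[·] v)

theorem mem_pathSet (hp : IsRootedTree r p) {v u : α} :
    u ∈ hp.pathSet v ↔ ∃ t < hp.depth v, p^[t] v = u := by
  simp [pathSet]

theorem card_pathSet (hp : IsRootedTree r p) (v : α) : (hp.pathSet v).card = hp.depth v := by
  rw [pathSet, Finset.card_image_of_injOn, Finset.card_range]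
  simpa [Set.InjOn] using hp.injOn_iterate v

theorem root_notMem_pathSet (hp : IsRootedTree r p) (v : α) : r ∉ hp.pathSet v := by
  rw [mem_pathSet]
  rintro ⟨t, ht, h⟩
  exact hp.iterate_ne_root_of_lt_depth ht h

/-- Joyal's map: the path `j, p j, …` to the root, matched with the listing `(pathSet j).toList`
of its vertices, becomes a permutation of the path; off the path `p` is kept. -/
noncomputable def joyal (hp : IsRootedTree r p) (j : α) (v : α) : α :=
  if v ∈ hp.pathSet j then p^[(hp.pathSet j).toList.idxOf v] j else p v

section

variable (hp : IsRootedTree r p) (j : α)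

theorem joyal_of_mem {v : α} (hv : v ∈ hp.pathSet j) :
    hp.joyal j v = p^[(hp.pathSet j).toList.idxOf v] j :=
  if_pos hv

theorem joyal_of_notMem {v : α} (hv : v ∉ hp.pathSet j) : hp.joyal j v = p v :=
  if_neg hv

theorem joyal_root : hp.joyal j r = r := by
  rw [joyal_of_notMem hp j (hp.root_notMem_pathSet j), hp.1]

theorem idxOf_lt_depth {v : α} (hv : v ∈ hp.pathSet j) :
    (hp.pathSet j).toList.idxOf v < hp.depth j := by
  rw [← hp.card_pathSet j, ← Finset.length_toList]
  exact List.idxOf_lt_length_iff.mpr (Finset.mem_toList.mpr hv)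

theorem mapsTo_joyal : MapsTo (hp.joyal j) (hp.pathSet j) (hp.pathSet j) := fun v hv => by
  rw [Finset.mem_coe, joyal_of_mem hp j hv, mem_pathSet]
  exact ⟨_, hp.idxOf_lt_depth j hv, rfl⟩

theorem injOn_joyal : InjOn (hp.joyal j) (hp.pathSet j) := by
  intro u hu v hv huv
  rw [joyal_of_mem hp j hu, joyal_of_mem hp j hv] at huv
  have := hp.injOn_iterate j (hp.idxOf_lt_depth j hu) (hp.idxOf_lt_depth j hv) huv
  exact List.idxOf_inj (Finset.mem_toList.mpr hu) |>.mp this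

theorem joyal_getD_toList {t : ℕ} (ht : t < hp.depth j) :
    hp.joyal j ((hp.pathSet j).toList.getD t r) = p^[t] j := by
  have hlen : t < (hp.pathSet j).toList.length := by
    rwa [Finset.length_toList, hp.card_pathSet]
  have hmem : (hp.pathSet j).toList[t] ∈ hp.pathSet j :=
    Finset.mem_toList.mp (List.getElem_mem hlen)
  rw [List.getD_eq_getElem _ _ hlen, joyal_of_mem hp j hmem,
    (Finset.nodup_toList _).idxOf_getElem t hlen]

theorem mem_pathSet_iff_mem_periodicPts {v : α} :
    v ∈ hp.pathSet j ↔ v ≠ r ∧ v ∈ periodicPts (hp.joyal j) := by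
  constructor
  · intro hv
    refine ⟨fun h => hp.root_notMem_pathSet j (h ▸ hv), ?_⟩
    have hinj := (hp.mapsTo_joyal j).restrict_inj.mpr (hp.injOn_joyal j)
    obtain ⟨t, ht, hper⟩ := mem_periodicPts.mp (hinj.mem_periodicPts ⟨v, hv⟩)
    exact mk_mem_periodicPts ht (hper.map (g := Subtype.val) fun _ => rfl)
  · rintro ⟨hvr, hper⟩
    by_contra hv
    -- Off the path `joyal` follows `p`, and once on the path (or at the root) it stays there.
    have hstep : ∀ t, (hp.joyal j)^[t] v ∈ insert r (hp.pathSet j) ∨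
        (hp.joyal j)^[t] v = p^[t] v := by
      intro t
      induction t with
      | zero => exact Or.inr rfl
      | succ t ih =>
        rw [iterate_succ_apply', iterate_succ_apply']
        rcases ih with h | h
        · left
          rcases Finset.mem_insert.mp h with h | h
          · rw [h, joyal_root]; exact Finset.mem_insert_self _ _
          · exact Finset.mem_insert_of_mem (hp.mapsTo_joyal j h)
        · by_cases hS : (hp.joyal j)^[t] v ∈ hp.pathSet j
          · exact Or.inl (Finset.mem_insert_of_mem (hp.mapsTo_joyal j hS))
          · right; rw [joyal_of_notMem hp j hS, h]
    obtain ⟨t, ht, hvt⟩ := mem_periodicPts.mp hper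
    rcases hstep t with h | h
    · rw [hvt.eq] at h
      rcases Finset.mem_insert.mp h with h | h
      · exact hvr h
      · exact hv h
    · exact hvr (hp.eq_root_of_isPeriodicPt ht (hvt.eq ▸ h).symm)

end

theorem joyal_injective :
    Injective fun x : {p : α → α // IsRootedTree r p} × α => x.1.2.joyal x.2 := by
  rintro ⟨⟨p, hp⟩, j⟩ ⟨⟨p', hp'⟩, j'⟩ hf
  simp only at hf
  have hS : hp.pathSet j = hp'.pathSet j' := Finset.ext fun v => by
    rw [mem_pathSet_iff_mem_periodicPts, mem_pathSet_iff_mem_periodicPts, hf]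
  have hD : hp.depth j = hp'.depth j' := by rw [← card_pathSet, ← card_pathSet, hS]
  have hpath : ∀ t ≤ hp.depth j, p^[t] j = p'^[t] j' := by
    intro t ht
    rcases ht.lt_or_eq with ht | rfl
    · rw [← hp.joyal_getD_toList j ht, ← hp'.joyal_getD_toList j' (hD ▸ ht), hS, hf]
    · rw [hp.iterate_depth, hD, hp'.iterate_depth]
  obtain rfl : j = j' := hpath 0 (Nat.zero_le _)
  obtain rfl : p = p' := funext fun v => by
    by_cases hv : v ∈ hp.pathSet j
    · obtain ⟨t, ht, rfl⟩ := hp.mem_pathSet.mp hv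
      rw [← iterate_succ_apply' p, hpath (t + 1) ht, hpath t ht.le, iterate_succ_apply']
    · rw [← hp.joyal_of_notMem j hv, ← hp'.joyal_of_notMem j (hS ▸ hv), hf]
  rfl

end IsRootedTree

theorem card_rootedTree_mul_le {α : Type*} [Fintype α] (r : α) :
    Nat.card {p : α → α // IsRootedTree r p} * Fintype.card α
      ≤ Fintype.card α ^ (Fintype.card α - 1) := by
  classical
  have hinj : Injective fun x : {p : α → α // IsRootedTree r p} × α =>
      fun v : {v // v ≠ r} => x.1.2.joyal x.2 v := by
    intro x y hxy
    refine IsRootedTree.joyal_injective (funext fun v => ?_)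
    by_cases hv : v = r
    · subst hv; simp only [IsRootedTree.joyal_root]
    · exact congrFun hxy ⟨v, hv⟩
  have := Nat.card_le_card_of_injective _ hinj
  simpa [Nat.card_prod, Fintype.card_subtype_compl] using this

theorem card_rootedTree_le {α : Type*} [Fintype α] (r : α) :
    Nat.card {p : α → α // IsRootedTree r p} ≤ Fintype.card α ^ (Fintype.card α - 2) := by
  have hpos : 0 < Fintype.card α := Fintype.card_pos_iff.mpr ⟨r⟩
  have hpow : Fintype.card α ^ (Fintype.card α - 1)
      = Fintype.card α ^ (Fintype.card α - 2) * Fintype.card α := by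
    rcases Nat.lt_or_ge (Fintype.card α) 2 with h | h
    · rw [show Fintype.card α = 1 by omega]; rfl
    · rw [← pow_succ]; congr 1; omega
  exact Nat.le_of_mul_le_mul_right (hpow ▸ card_rootedTree_mul_le r) hpos

theorem Set.EqOn.iterate {α : Type*} {f g : α → α} {s : Set α} (h : EqOn f g s)
    (hg : MapsTo g s s) (k : ℕ) : EqOn f^[k] g^[k] s := by
  induction k with
  | zero => exact eqOn_refl _ _
  | succ k ih =>
    intro x hx
    rw [iterate_succ_apply, iterate_succ_apply, h hx, ih (hg hx)]

theorem SimpleGraph.Reachable.mem_of_adj_mem {V : Type*} {G : SimpleGraph V} {A : Set V}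
    (hA : ∀ a ∈ A, ∀ b, G.Adj a b → b ∈ A) {u v : V} (huv : G.Reachable u v)
    (hu : u ∈ A) : v ∈ A := by
  obtain ⟨w⟩ := huv
  induction w with
  | nil => exact hu
  | cons hadj _ ih => exact ih (hA _ hu _ hadj)

/-- Label `0` stands for the origin and label `i.succ` for an endpoint of the bond `σ i`,
attached to the tree at label `q i.succ`; `T` is the set of labels explored so far. -/
structure IsExploration {d n : ℕ} (σ : Fin n → Sym2 (Vtx d)) (T : Finset (Fin (n + 1)))
    (q : Fin (n + 1) → Fin (n + 1)) (pos : Fin (n + 1) → Vtx d) : Prop where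
  zero_mem : 0 ∈ T
  parent_zero : q 0 = 0
  pos_zero : pos 0 = 0
  mapsTo : MapsTo q T T
  reach : ∀ v ∈ T, ∃ k, q^[k] v = 0
  bond : ∀ i : Fin n, i.succ ∈ T → σ i = s(pos (q i.succ), pos i.succ)

namespace IsExploration

variable {d n : ℕ} {σ : Fin n → Sym2 (Vtx d)} {T : Finset (Fin (n + 1))}
  {q : Fin (n + 1) → Fin (n + 1)} {pos : Fin (n + 1) → Vtx d}

theorem singleton_zero (σ : Fin n → Sym2 (Vtx d)) : IsExploration σ {0} 0 0 where
  zero_mem := Finset.mem_singleton_self 0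
  parent_zero := rfl
  pos_zero := rfl
  mapsTo := fun _ _ => Finset.mem_singleton_self 0
  reach := fun _ _ => ⟨1, rfl⟩
  bond := fun i hi => absurd (Finset.mem_singleton.mp hi) (Fin.succ_ne_zero i)

theorem update (h : IsExploration σ T q pos) {i : Fin n} (hi : i.succ ∉ T) {u : Fin (n + 1)}
    (hu : u ∈ T) {y : Vtx d} (hσ : σ i = s(pos u, y)) :
    IsExploration σ (insert i.succ T) (Function.update q i.succ u)
      (Function.update pos i.succ y) := by
  have hne : ∀ v ∈ T, v ≠ i.succ := fun v hv h => hi (h ▸ hv)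
  have heq : EqOn (Function.update q i.succ u) q T := fun v hv => update_of_ne (hne v hv) _ _
  refine
    { zero_mem := Finset.mem_insert_of_mem h.zero_mem
      parent_zero := by rw [heq h.zero_mem, h.parent_zero]
      pos_zero := by rw [update_of_ne (hne 0 h.zero_mem), h.pos_zero]
      mapsTo := ?mapsTo
      reach := ?reach
      bond := ?bond }
  case mapsTo =>
    intro v hv
    rcases Finset.mem_insert.mp hv with rfl | hv
    · simpa using Finset.mem_insert_of_mem hu
    · simpa [heq hv] using Finset.mem_insert_of_mem (h.mapsTo hv)
  case reach =>
    have hiter := heq.iterate h.mapsTo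
    intro v hv
    rcases Finset.mem_insert.mp hv with rfl | hv
    · obtain ⟨k, hk⟩ := h.reach u hu
      exact ⟨k + 1, by rw [iterate_succ_apply, update_self, hiter k hu, hk]⟩
    · obtain ⟨k, hk⟩ := h.reach v hv
      exact ⟨k, by rw [hiter k hv, hk]⟩
  case bond =>
    intro j hj
    rcases Finset.mem_insert.mp hj with hj | hj
    · obtain rfl := Fin.succ_injective _ hj
      rw [update_self, update_self, update_of_ne (hne u hu), hσ]
    · rw [heq hj, update_of_ne (hne _ (h.mapsTo hj)), update_of_ne (hne _ hj), h.bond j hj]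

theorem exists_frontier_bond {G : SimpleGraph (Vtx d)}
    (hE : IsLatticeAnimal d G (Finset.univ.image σ)) (h : IsExploration σ T q pos)
    (hT : T ≠ Finset.univ) : ∃ i, i.succ ∉ T ∧ ∃ u ∈ T, ∃ y, σ i = s(pos u, y) := by
  by_contra! hcon
  set H := bondGraph d (Finset.univ.image σ)
  have hclosed : ∀ a ∈ pos '' T, ∀ b, H.Adj a b → b ∈ pos '' T := by
    rintro _ ⟨u, hu, rfl⟩ b hab
    obtain ⟨m, -, hm⟩ := Finset.mem_image.mp (SimpleGraph.fromEdgeSet_adj _ |>.mp hab).1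
    by_cases hmT : m.succ ∈ T
    · rw [h.bond m hmT, Sym2.eq_iff] at hm
      rcases hm with ⟨-, rfl⟩ | ⟨rfl, -⟩
      · exact ⟨m.succ, hmT, rfl⟩
      · exact ⟨_, h.mapsTo hmT, rfl⟩
    · exact (hcon m hmT u hu b hm).elim
  obtain ⟨v, hvT⟩ := not_forall.mp (mt Finset.eq_univ_iff_forall.mpr hT)
  obtain ⟨i, rfl⟩ := Fin.exists_succ_eq_of_ne_zero (x := v) fun hv => hvT (hv ▸ h.zero_mem)
  obtain ⟨x, y, hxy⟩ : ∃ x y, σ i = s(x, y) := ⟨_, _, (Quot.out_eq (σ i)).symm⟩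
  have hσE : σ i ∈ Finset.univ.image σ := Finset.mem_image_of_mem σ (Finset.mem_univ i)
  have hxH : x ∈ H.support := by
    refine ⟨y, SimpleGraph.fromEdgeSet_adj _ |>.mpr ⟨hxy ▸ hσE, ?_⟩⟩
    have hxyG : s(x, y) ∈ G.edgeSet := hxy ▸ hE.1 hσE
    exact G.ne_of_adj hxyG
  have h0H : (0 : Vtx d) ∈ H.support := hE.2.2 ⟨_, hσE⟩
  have h0 : (0 : Vtx d) ∈ pos '' T := ⟨0, h.zero_mem, h.pos_zero⟩
  have hx : x ∈ pos '' T := by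
    rcases eq_or_ne 0 x with rfl | hne
    · exact h0
    · exact (hE.2.1 h0H hxH hne).mem_of_adj_mem hclosed h0
  obtain ⟨u, hu, rfl⟩ := hx
  exact hcon i hvT u hu y hxy

theorem isRootedTree (h : IsExploration σ Finset.univ q pos) : IsRootedTree 0 q :=
  ⟨h.parent_zero, fun v => h.reach v (Finset.mem_univ v)⟩

end IsExploration

theorem IsLatticeAnimal.exists_isExploration_univ {d n : ℕ} {G : SimpleGraph (Vtx d)}
    {σ : Fin n → Sym2 (Vtx d)} (hE : IsLatticeAnimal d G (Finset.univ.image σ)) :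
    ∃ q pos, IsExploration σ Finset.univ q pos := by
  suffices ∀ k, ∃ T q pos, IsExploration σ T q pos ∧ min k (n + 1) ≤ T.card by
    obtain ⟨T, q, pos, h, hT⟩ := this (n + 1)
    have hcard := T.card_le_univ
    obtain rfl : T = Finset.univ := Finset.eq_univ_of_card T (by simp at hT hcard ⊢; omega)
    exact ⟨q, pos, h⟩
  intro k
  induction k with
  | zero => exact ⟨_, _, _, IsExploration.singleton_zero σ, by simp⟩
  | succ k ih =>
    obtain ⟨T, q, pos, h, hk⟩ := ih
    by_cases hT : T = Finset.univ
    · subst hT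
      exact ⟨_, q, pos, h, by simp⟩
    obtain ⟨i, hi, u, hu, y, hσ⟩ := h.exists_frontier_bond hE hT
    refine ⟨_, _, _, h.update hi hu hσ, ?_⟩
    rw [Finset.card_insert_of_notMem hi]
    omega

theorem IsExploration.eq_of_sub_eq {d n : ℕ} {σ σ' : Fin n → Sym2 (Vtx d)}
    {q : Fin (n + 1) → Fin (n + 1)} {pos pos' : Fin (n + 1) → Vtx d}
    (h : IsExploration σ Finset.univ q pos) (h' : IsExploration σ' Finset.univ q pos')
    (hsub : ∀ i : Fin n, pos i.succ - pos (q i.succ) = pos' i.succ - pos' (q i.succ)) :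
    σ = σ' := by
  have hpos : pos = pos' := h.isRootedTree.ext_of_sub_parent (h.pos_zero.trans h'.pos_zero.symm)
    fun v hv => by obtain ⟨i, rfl⟩ := Fin.exists_succ_eq_of_ne_zero hv; exact hsub i
  funext i
  rw [h.bond i (Finset.mem_univ _), h'.bond i (Finset.mem_univ _), hpos]

/-- Repeated bonds are allowed: only the set of bonds has to be a lattice animal. -/
def animalBondSeqs (d : ℕ) (G : SimpleGraph (Vtx d)) (n : ℕ) : Set (Fin n → Sym2 (Vtx d)) :=
  {σ | IsLatticeAnimal d G (Finset.univ.image σ)}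

theorem exists_injective_animalBondSeqs_to_rootedTree_prod {d n : ℕ} {G : SimpleGraph (Vtx d)}
    {N : Finset (Vtx d)} (hN : ∀ ⦃x y⦄, G.Adj x y → y - x ∈ N) :
    ∃ f : animalBondSeqs d G n →
      {q : Fin (n + 1) → Fin (n + 1) // IsRootedTree 0 q} × (Fin n → N), Injective f := by
  choose q pos h using fun σ : animalBondSeqs d G n => σ.2.exists_isExploration_univ
  have hstep : ∀ σ (i : Fin n), pos σ i.succ - pos σ (q σ i.succ) ∈ N := fun σ i => by
    refine hN ?_
    have := σ.2.1 (Finset.mem_image_of_mem σ.1 (Finset.mem_univ i))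
    rwa [(h σ).bond i (Finset.mem_univ _)] at this
  refine ⟨fun σ => (⟨q σ, (h σ).isRootedTree⟩, fun i => ⟨_, hstep σ i⟩), ?_⟩
  intro σ σ' hσ
  have hq : q σ = q σ' := congrArg (fun c => c.1.1) hσ
  have h' := h σ'
  rw [← hq] at h'
  refine Subtype.ext ((h σ).eq_of_sub_eq h' fun i => ?_)
  simpa [hq] using congrArg (fun c => (c.2 i).1) hσ

def latticeAnimals (d : ℕ) (G : SimpleGraph (Vtx d)) (n : ℕ) : Set (Finset (Sym2 (Vtx d))) :=
  {E | E.card = n ∧ IsLatticeAnimal d G E}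

noncomputable def enumerateAnimal {d n : ℕ} {G : SimpleGraph (Vtx d)}
    (x : latticeAnimals d G n × Equiv.Perm (Fin n)) : Fin n → Sym2 (Vtx d) :=
  fun i => (Finset.equivFinOfCardEq x.1.2.1).symm (x.2 i)

theorem image_enumerateAnimal {d n : ℕ} {G : SimpleGraph (Vtx d)}
    (x : latticeAnimals d G n × Equiv.Perm (Fin n)) :
    Finset.univ.image (enumerateAnimal x) = x.1.1 := by
  ext e
  simp only [enumerateAnimal, Finset.mem_image, Finset.mem_univ, true_and]
  refine ⟨fun ⟨i, hi⟩ => hi ▸ Subtype.prop _, fun he => ?_⟩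
  exact ⟨x.2.symm (Finset.equivFinOfCardEq x.1.2.1 ⟨e, he⟩), by simp⟩

theorem enumerateAnimal_mem_animalBondSeqs {d n : ℕ} {G : SimpleGraph (Vtx d)}
    (x : latticeAnimals d G n × Equiv.Perm (Fin n)) :
    enumerateAnimal x ∈ animalBondSeqs d G n := by
  rw [animalBondSeqs, Set.mem_ofPred_eq, image_enumerateAnimal]
  exact x.1.2.2

theorem enumerateAnimal_injective {d n : ℕ} {G : SimpleGraph (Vtx d)} :
    Injective (enumerateAnimal (d := d) (n := n) (G := G)) := by
  rintro ⟨E, π⟩ ⟨E', π'⟩ h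
  obtain rfl : E = E' := Subtype.ext <| by
    rw [← image_enumerateAnimal (E, π), ← image_enumerateAnimal (E', π'), h]
  obtain rfl : π = π' := Equiv.ext fun i =>
    (Finset.equivFinOfCardEq E.2.1).symm.injective (Subtype.ext (congrFun h i))
  rfl

theorem animalCount_mul_factorial_le {d n : ℕ} {G : SimpleGraph (Vtx d)} {N : Finset (Vtx d)}
    (hN : ∀ ⦃x y⦄, G.Adj x y → y - x ∈ N) :
    animalCount d G n * n.factorial ≤ (n + 1) ^ (n - 1) * N.card ^ n := by
  obtain ⟨f, hf⟩ := exists_injective_animalBondSeqs_to_rootedTree_prod (n := n) hN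
  have hlabel := (Set.injective_codRestrict (enumerateAnimal_mem_animalBondSeqs (n := n))).mpr
    (enumerateAnimal_injective (G := G))
  have hcard := Nat.card_le_card_of_injective _ (hf.comp hlabel)
  have htrees := card_rootedTree_le (0 : Fin (n + 1))
  rw [Nat.card_prod, Nat.card_prod, latticeAnimals, Nat.card_coe_set_eq, Nat.card_perm,
    Nat.card_fun, Nat.card_eq_finsetCard, Nat.card_fin] at hcard
  rw [Fintype.card_fin, Nat.add_sub_add_right] at htrees
  calc animalCount d G n * n.factorial
      ≤ Nat.card {q : Fin (n + 1) → Fin (n + 1) // IsRootedTree 0 q} * N.card ^ n := hcard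
    _ ≤ (n + 1) ^ (n - 1) * N.card ^ n := Nat.mul_le_mul_right _ htrees

noncomputable def spreadSteps (d L : ℕ) : Finset (Vtx d) :=
  (Fintype.piFinset fun _ : Fin d => Finset.Icc (-(L : ℤ)) L).erase 0

theorem card_spreadSteps (d L : ℕ) : (spreadSteps d L).card = (2 * L + 1) ^ d - 1 := by
  rw [spreadSteps, Finset.card_erase_of_mem (by simp), Fintype.card_piFinset, Finset.prod_const,
    Int.card_Icc, Finset.card_univ, Fintype.card_fin]
  congr 2
  omega

theorem spreadGraph_adj_sub_mem {d L : ℕ} ⦃x y : Vtx d⦄ (h : (spreadGraph d L).Adj x y) :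
    y - x ∈ spreadSteps d L := by
  obtain ⟨hne, hle⟩ := h
  simp only [spreadSteps, Finset.mem_erase, sub_ne_zero, Fintype.mem_piFinset, Finset.mem_Icc,
    Pi.sub_apply, ← abs_le]
  exact ⟨hne.symm, fun i => abs_sub_comm (x i) (y i) ▸ hle i⟩

theorem animal_count_upper_bound_spread_out_general (d L : ℕ) (n : ℕ) :
    (animalCount d (spreadGraph d L) n : ℝ)
      ≤ ((((2 * L + 1) ^ d - 1 : ℕ) : ℝ)) ^ n * ((n + 1 : ℝ) ^ (n - 1) / (n.factorial : ℝ)) := by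
  have key := animalCount_mul_factorial_le (n := n) (spreadGraph_adj_sub_mem (d := d) (L := L))
  rw [card_spreadSteps] at key
  rw [← mul_div_assoc, le_div_iff₀ (by positivity)]
  exact_mod_cast key.trans_eq (mul_comm _ _)

/-- For the spread-out model on `ℤ^d` in every dimension `d ≥ 1`, every `L ≥ 1`, and
every `n ≥ 0`, the number of lattice animals satisfies `a_n(d,L) ≤ K^n (n+1)^{n-1}/n!`,
where `K = (2L+1)^d - 1`. -/
theorem animal_count_upper_bound_spread_out (d L : ℕ) (hd : 1 ≤ d) (hL : 1 ≤ L) (n : ℕ) :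
    (animalCount d (spreadGraph d L) n : ℝ)
      ≤ ((((2 * L + 1) ^ d - 1 : ℕ) : ℝ)) ^ n * ((n + 1 : ℝ) ^ (n - 1) / (n.factorial : ℝ)) :=
  animal_count_upper_bound_spread_out_general d L n
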